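/- arXiv:math/9804123 — 2 statements merged into one kernel-verified Lean document; each statement's English description precedes it below -/
import Mathlib

section
/- Let 𝒟 be a triangulated category equipped with a t-structure (𝒟^{≤0}, 𝒟^{≥0}). Then every object M of 𝒟 of bounded cohomological amplitude (i.e., lying in 𝒟^{≥a} ∩ 𝒟^{≤b} for some integers a ≤ b) has the property that every projector p : M → M with p ∘ p = p splits: there exist an object I and morphisms π : M → I, ι : I → M with ι ∘ π = p and π ∘ ι = id_I. In particular, the full subcategory of cohomologically bounded objects of 𝒟 is pseudoabelian. (Lemma 2.14.) -/
/-!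
Cut a bounded object `M` at its top degree: `A → M → B → A⟦1⟧` with `A` of smaller amplitude and
`B` concentrated in one degree. By functoriality of the truncations, `p` induces idempotents on
`A` and `B`; split them by induction with images `I` and `J`, and let `K` be the cone of the
induced map `J → I⟦1⟧`. The splittings lift to maps `φ : M → K` and `ψ : K → M`. Since
`Hom(A⟦1⟧, B) = 0`, `ψ ≫ φ` is unipotent, hence invertible, and after correcting `ψ` by its
inverse, `φ ≫ ψ` is an idempotent splitting through `K` whose difference with `p` squares to zero;
such a square-zero perturbation does not affect splitting.

For `X` concentrated in degree `a`, the cone `Z` of `𝟙 - p` is an extension of the image of `p`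
by its shift, and the image of `p` is recovered as `τ≥a Z`.
-/

open CategoryTheory CategoryTheory.Limits CategoryTheory.Pretriangulated
  CategoryTheory.Triangulated

namespace CategoryTheory

open Category Preadditive

def IsSplitIdempotent {C : Type*} [Category C] {X : C} (p : X ⟶ X) : Prop :=
  ∃ (I : C) (π : X ⟶ I) (ι : I ⟶ X), π ≫ ι = p ∧ ι ≫ π = 𝟙 I

section Preadditive

variable {C : Type*} [Category C] [Preadditive C]

lemma isIso_id_add_of_comp_self_eq_zero {X : C} (n : X ⟶ X) (hn : n ≫ n = 0) :
    IsIso (𝟙 X + n) :=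
  ⟨𝟙 X - n, by simp [hn], by simp [hn]⟩

lemma IsSplitIdempotent.of_comp_self_sub_eq_zero {X K : C} {p : X ⟶ X} (hp : p ≫ p = p)
    (φ : X ⟶ K) (ψ : K ⟶ X) (hψφ : ψ ≫ φ = 𝟙 K)
    (hd : (φ ≫ ψ - p) ≫ (φ ≫ ψ - p) = 0) : IsSplitIdempotent p := by
  have hv : (φ ≫ ψ) ≫ (φ ≫ ψ) = φ ≫ ψ := by rw [assoc, reassoc_of% hψφ]
  generalize hv_def : φ ≫ ψ = v at hv hd
  have hsum : v ≫ p + p ≫ v = v + p := by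
    simp only [sub_comp, comp_sub, hv, hp] at hd
    rw [← sub_eq_zero, ← neg_eq_zero, ← hd]
    abel
  have hpvp : p ≫ v ≫ p = p := by
    have := congrArg (p ≫ ·) hsum
    simp only [comp_add, reassoc_of% hp, hp] at this
    exact add_right_cancel (this.trans (add_comm _ _))
  have hvpv : v ≫ p ≫ v = v := by
    have := congrArg (· ≫ v) hsum
    simp only [add_comp, assoc, hv] at this
    exact add_right_cancel this
  subst hv_def
  refine ⟨K, p ≫ φ, ψ ≫ p, by simpa only [assoc] using hpvp, ?_⟩
  calc (ψ ≫ p) ≫ p ≫ φ = (ψ ≫ φ) ≫ ψ ≫ p ≫ φ ≫ (ψ ≫ φ) := by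
        simp only [hψφ, id_comp, comp_id, assoc, reassoc_of% hp]
    _ = ψ ≫ ((φ ≫ ψ) ≫ p ≫ (φ ≫ ψ)) ≫ φ := by simp only [assoc]
    _ = 𝟙 K := by rw [hvpv]; simp only [assoc, reassoc_of% hψφ, hψφ]

end Preadditive

section Pretriangulated

variable {C : Type*} [Category C] [Preadditive C] [HasZeroObject C] [HasShift C ℤ]
  [∀ n : ℤ, (shiftFunctor C n).Additive] [Pretriangulated C]

lemma Pretriangulated.comp_self_eq_zero_of_mor₁_comp_of_comp_mor₂ {T : Triangle C}
    (hT : T ∈ distTriang C) (h₁₃ : ∀ m : T.obj₁⟦(1 : ℤ)⟧ ⟶ T.obj₃, m = 0)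
    {d : T.obj₂ ⟶ T.obj₂} (hd₁ : T.mor₁ ≫ d = 0) (hd₂ : d ≫ T.mor₂ = 0) : d ≫ d = 0 := by
  obtain ⟨e, rfl⟩ := T.yoneda_exact₂ hT d hd₁
  obtain ⟨m, hm⟩ := T.yoneda_exact₃ hT (e ≫ T.mor₂) (by rwa [← assoc])
  obtain ⟨w, rfl⟩ := T.coyoneda_exact₂ hT e (by rw [hm, h₁₃ m, comp_zero])
  simp only [assoc, comp_distTriang_mor_zero₁₂_assoc _ hT, zero_comp, comp_zero]

lemma Pretriangulated.isSplitIdempotent_hom₂ {T : Triangle C} (hT : T ∈ distTriang C)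
    (h₁₃ : ∀ m : T.obj₁⟦(1 : ℤ)⟧ ⟶ T.obj₃, m = 0) (e : T ⟶ T)
    (he : e.hom₂ ≫ e.hom₂ = e.hom₂) (he₁ : IsSplitIdempotent e.hom₁)
    (he₃ : IsSplitIdempotent e.hom₃) : IsSplitIdempotent e.hom₂ := by
  obtain ⟨I, πA, ιA, hA, hI⟩ := he₁
  obtain ⟨J, πB, ιB, hB, hJ⟩ := he₃
  have hIJ (m : I⟦(1 : ℤ)⟧ ⟶ J) : m = 0 := by
    have : m = ιA⟦(1 : ℤ)⟧' ≫ (πA⟦(1 : ℤ)⟧' ≫ m ≫ ιB) ≫ πB := by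
      simp only [assoc, hJ, comp_id, ← Functor.map_comp_assoc, hI, Functor.map_id, id_comp]
    rw [this, h₁₃ (πA⟦(1 : ℤ)⟧' ≫ m ≫ ιB), zero_comp, comp_zero]
  have hπA : e.hom₁ ≫ πA = πA := by rw [← hA, assoc, hI, comp_id]
  have hιB : ιB ≫ e.hom₃ = ιB := by rw [← hB, reassoc_of% hJ]
  obtain ⟨K, fK, gK, hK⟩ := distinguished_cocone_triangle₂ (ιB ≫ T.mor₃ ≫ πA⟦(1 : ℤ)⟧')
  obtain ⟨φ, hφ₁, hφ₂⟩ := complete_distinguished_triangle_morphism₂ T _ hT hK πA πB (by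
    show T.mor₃ ≫ πA⟦(1 : ℤ)⟧' = πB ≫ ιB ≫ T.mor₃ ≫ πA⟦(1 : ℤ)⟧'
    rw [reassoc_of% hB, ← e.comm₃_assoc, ← Functor.map_comp, hπA])
  obtain ⟨ψ, hψ₁, hψ₂⟩ := complete_distinguished_triangle_morphism₂ _ T hK hT ιA ιB (by
    show (ιB ≫ T.mor₃ ≫ πA⟦(1 : ℤ)⟧') ≫ ιA⟦(1 : ℤ)⟧' = ιB ≫ T.mor₃
    rw [assoc, assoc, ← Functor.map_comp, hA, e.comm₃, reassoc_of% hιB])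
  dsimp only [Triangle.mk] at φ ψ hφ₁ hφ₂ hψ₁ hψ₂
  have hfK : fK ≫ ψ ≫ φ = fK := by rw [reassoc_of% hψ₁, hφ₁, reassoc_of% hI]
  have hgK : (ψ ≫ φ) ≫ gK = gK := by rw [assoc, ← hφ₂, ← reassoc_of% hψ₂, hJ, comp_id]
  have : IsIso (ψ ≫ φ) := by
    have hn₁ : fK ≫ (ψ ≫ φ - 𝟙 K) = 0 := by rw [comp_sub, hfK, comp_id, sub_self]
    have hn₂ : (ψ ≫ φ - 𝟙 K) ≫ gK = 0 := by rw [sub_comp, hgK, id_comp, sub_self]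
    have hn : (ψ ≫ φ - 𝟙 K) ≫ (ψ ≫ φ - 𝟙 K) = 0 :=
      comp_self_eq_zero_of_mor₁_comp_of_comp_mor₂ hK hIJ hn₁ hn₂
    simpa using isIso_id_add_of_comp_self_eq_zero _ hn
  have hfK' : fK ≫ inv (ψ ≫ φ) = fK := by rw [IsIso.comp_inv_eq, hfK]
  have hgK' : inv (ψ ≫ φ) ≫ gK = gK := by rw [IsIso.inv_comp_eq, hgK]
  refine .of_comp_self_sub_eq_zero he φ (inv (ψ ≫ φ) ≫ ψ) (by simp) ?_
  apply comp_self_eq_zero_of_mor₁_comp_of_comp_mor₂ hT h₁₃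
  · rw [comp_sub, reassoc_of% hφ₁, reassoc_of% hfK', hψ₁, reassoc_of% hA, e.comm₁, sub_self]
  · rw [sub_comp, assoc, assoc, ← hψ₂, reassoc_of% hgK', ← reassoc_of% hφ₂, hB, e.comm₂,
      sub_self]

namespace Triangulated.TStructure

variable (t : TStructure C)

lemma isSplitIdempotent_of_isLE_of_isGE (a : ℤ) {X : C} [t.IsLE X a] [t.IsGE X a]
    {p : X ⟶ X} (hp : p ≫ p = p) : IsSplitIdempotent p := by
  obtain ⟨Z, g, h, hZ⟩ := distinguished_cocone_triangle (𝟙 X - p)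
  have hgp : (𝟙 X - p) ≫ g = 0 := comp_distTriang_mor_zero₁₂ _ hZ
  obtain ⟨j, hj⟩ : ∃ j : Z ⟶ X, p = g ≫ j := Triangle.yoneda_exact₂ _ hZ p (by
    show (𝟙 X - p) ≫ p = 0
    rw [sub_comp, id_comp, hp, sub_self])
  have hpg : p ≫ g = g := by rwa [sub_comp, id_comp, sub_eq_zero, eq_comm] at hgp
  obtain ⟨k, hk⟩ : ∃ k : X⟦(1 : ℤ)⟧ ⟶ Z, j ≫ g - 𝟙 Z = h ≫ k :=
    Triangle.yoneda_exact₃ _ hZ (j ≫ g - 𝟙 Z) (by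
      show g ≫ (j ≫ g - 𝟙 Z) = 0
      rw [comp_sub, comp_id, ← assoc, ← hj, hpg, sub_self])
  have : t.IsLE (X⟦(1 : ℤ)⟧) (a - 1) := t.isLE_shift X a 1 (a - 1)
  refine ⟨(t.truncGE a).obj Z, g ≫ (t.truncGEπ a).app Z, t.descTruncGE j a,
    by rw [assoc, π_descTruncGE, hj], t.from_truncGE_obj_ext ?_⟩
  rw [reassoc_of% (t.π_descTruncGE j a), ← assoc j, sub_eq_iff_eq_add'.1 hk, add_comp, id_comp,
    assoc, t.zero (k ≫ (t.truncGEπ a).app Z) (a - 1) a, comp_zero, add_zero, comp_id]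

lemma isSplitIdempotent_of_isGE_of_isLE {a b : ℤ} (hab : a ≤ b) {X : C} [t.IsGE X a]
    [t.IsLE X b] {p : X ⟶ X} (hp : p ≫ p = p) : IsSplitIdempotent p := by
  induction b, hab using Int.leInduction generalizing X with
  | base => exact t.isSplitIdempotent_of_isLE_of_isGE a hp
  | succ b hab ih =>
    let T := (t.triangleLTGE (b + 1)).obj X
    have hT : T ∈ distTriang C := t.triangleLTGE_distinguished (b + 1) X
    have : t.IsGE T.obj₃ (a - 1) := t.isGE_of_ge _ _ (b + 1)
    have : t.IsGE T.obj₁ a :=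
      t.isGE₂ _ (inv_rot_of_distTriang _ hT) a (t.isGE_shift T.obj₃ (a - 1) (-1) a) ‹_›
    have : t.IsLE T.obj₁ b := t.isLE_of_le _ (b + 1 - 1) b
    have : t.IsLE (T.obj₁⟦(1 : ℤ)⟧) (b - 1) := t.isLE_shift _ b 1 (b - 1)
    have : t.IsLE (T.obj₁⟦(1 : ℤ)⟧) (b + 1) := t.isLE_of_le _ (b - 1) (b + 1)
    have : t.IsLE T.obj₃ (b + 1) := t.isLE₂ _ (rot_of_distTriang _ hT) (b + 1) ‹_› ‹_›
    have he : (t.triangleLTGE (b + 1)).map p ≫ (t.triangleLTGE (b + 1)).map p =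
        (t.triangleLTGE (b + 1)).map p := by rw [← Functor.map_comp, hp]
    exact isSplitIdempotent_hom₂ hT (fun m ↦ t.zero m (b - 1) (b + 1))
      ((t.triangleLTGE (b + 1)).map p) hp (ih (by simpa using congrArg (·.hom₁) he))
      (t.isSplitIdempotent_of_isLE_of_isGE (b + 1) (by simpa using congrArg (·.hom₃) he))

end Triangulated.TStructure

end Pretriangulated

end CategoryTheory

/-- Lemma 2.14: in a triangulated category equipped with a t-structure, every
projector on a cohomologically bounded object splits.  In particular the full
subcategory of cohomologically bounded objects is pseudoabelian. -/
theorem bounded_projector_splits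
    (𝒟 : Type*) [Category 𝒟] [Preadditive 𝒟] [HasZeroObject 𝒟]
    [HasShift 𝒟 ℤ] [∀ n : ℤ, (shiftFunctor 𝒟 n).Additive]
    [Pretriangulated 𝒟] [IsTriangulated 𝒟]
    (t : TStructure 𝒟)
    (M : 𝒟) (hbdd : ∃ a b : ℤ, a ≤ b ∧ t.ge a M ∧ t.le b M)
    (p : M ⟶ M) (hp : p ≫ p = p) :
    ∃ (I : 𝒟) (π : M ⟶ I) (ι : I ⟶ M), π ≫ ι = p ∧ ι ≫ π = 𝟙 I := by
  obtain ⟨a, b, hab, hge, hle⟩ := hbdd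
  have : t.IsGE M a := ⟨hge⟩
  have : t.IsLE M b := ⟨hle⟩
  exact t.isSplitIdempotent_of_isGE_of_isLE hab hp
end

section
/- Decomposition mechanism: Let ℬ be an additive category, 𝒜 an abelian category in which every monomorphism and every epimorphism splits (semisimple), and F : 𝒜 → ℬ an additive fully faithful functor. Let A, A' be objects of 𝒜, B an object of ℬ, and let i_* : F(A) → B and i^* : B → F(A') be morphisms in ℬ. Let a : A → A' be the unique morphism of 𝒜 with F(a) = i^* ∘ i_*, and let V = Im a be its image in 𝒜. Then there exists a (not necessarily unique) projector β : B → B, β ∘ β = β, together with morphisms r : B → F(V) and s : F(V) → B such that s ∘ r = β and r ∘ s = id_{F(V)}; that is, F(Im a) is an image of the projector β in ℬ. (Lemma 4.15.) -/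
open CategoryTheory CategoryTheory.Limits

/-!
Split `a` through its image as `A ↠ Im a ↪ A'` and choose a section `s₀` of the epi and a
retraction `r₀` of the mono, so that `s₀ ≫ a ≫ r₀ = 𝟙 (Im a)`. Applying `F` and inserting
`F a = i_* ≫ i^*` exhibits `F (Im a)` as a retract of `B`, with inclusion `F s₀ ≫ i_*` and
retraction `i^* ≫ F r₀`; the induced idempotent on `B` is the projector `β`.
-/

namespace CategoryTheory

theorem Retract.r_i_idem {C : Type*} [Category C] {X Y : C} (h : Retract X Y) :
    (h.r ≫ h.i) ≫ (h.r ≫ h.i) = h.r ≫ h.i := by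
  simp only [Category.assoc, h.retract_assoc]

theorem Limits.image.section_comp_comp_retraction {C : Type*} [Category C] {A A' : C}
    (a : A ⟶ A') [HasImage a] {s : image a ⟶ A} {r : A' ⟶ image a}
    (hs : s ≫ factorThruImage a = 𝟙 _) (hr : image.ι a ≫ r = 𝟙 _) : s ≫ a ≫ r = 𝟙 _ := by
  calc s ≫ a ≫ r = (s ≫ factorThruImage a) ≫ image.ι a ≫ r := by simp
    _ = 𝟙 _ := by rw [hs, hr, Category.id_comp]

end CategoryTheory

theorem decomposition_mechanism_general
    (𝒜 : Type*) [Category 𝒜] [Abelian 𝒜]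
    (ℬ : Type*) [Category ℬ]
    (hmono : ∀ {X Y : 𝒜} (f : X ⟶ Y), Mono f → ∃ r : Y ⟶ X, f ≫ r = 𝟙 X)
    (hepi : ∀ {X Y : 𝒜} (f : X ⟶ Y), Epi f → ∃ s : Y ⟶ X, s ≫ f = 𝟙 Y)
    (F : 𝒜 ⥤ ℬ)
    (A A' : 𝒜) (B : ℬ)
    (iStar : F.obj A ⟶ B) (iUpper : B ⟶ F.obj A')
    (a : A ⟶ A') (ha : F.map a = iStar ≫ iUpper) :
    ∃ (β : B ⟶ B) (r : B ⟶ F.obj (image a)) (s : F.obj (image a) ⟶ B),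
      β ≫ β = β ∧ r ≫ s = β ∧ s ≫ r = 𝟙 (F.obj (image a)) := by
  obtain ⟨s₀, hs₀⟩ := hepi (factorThruImage a) inferInstance
  obtain ⟨r₀, hr₀⟩ := hmono (image.ι a) inferInstance
  have hV : F.map (s₀ ≫ a ≫ r₀) = 𝟙 _ := by
    rw [image.section_comp_comp_retraction a hs₀ hr₀, F.map_id]
  let R : Retract (F.obj (image a)) B :=
    { i := F.map s₀ ≫ iStar
      r := iUpper ≫ F.map r₀
      retract := by simpa only [Functor.map_comp, ha, Category.assoc] using hV }
  exact ⟨R.r ≫ R.i, R.r, R.i, R.r_i_idem, rfl, R.retract⟩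

/-- Lemma 4.15 (decomposition mechanism): let `𝒜` be a semisimple abelian
category (every mono and every epi splits), `ℬ` an additive category, and
`F : 𝒜 ⥤ ℬ` an additive fully faithful functor.  Given `i_* : F(A) ⟶ B` and
`i^* : B ⟶ F(A')` in `ℬ`, and `a : A ⟶ A'` the (unique) morphism of `𝒜` with
`F(a) = i^* ∘ i_*`, there is a (not necessarily unique) projector
`β : B ⟶ B` whose image is `F(Im a)`: that is, there are `r : B ⟶ F(Im a)`
and `s : F(Im a) ⟶ B` with `s ∘ r = β` and `r ∘ s = id`. -/
theorem decomposition_mechanism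
    (𝒜 : Type*) [Category 𝒜] [Abelian 𝒜]
    (ℬ : Type*) [Category ℬ] [Preadditive ℬ] [HasFiniteBiproducts ℬ]
    (hmono : ∀ {X Y : 𝒜} (f : X ⟶ Y), Mono f → ∃ r : Y ⟶ X, f ≫ r = 𝟙 X)
    (hepi : ∀ {X Y : 𝒜} (f : X ⟶ Y), Epi f → ∃ s : Y ⟶ X, s ≫ f = 𝟙 Y)
    (F : 𝒜 ⥤ ℬ) [F.Additive] [F.Full] [F.Faithful]
    (A A' : 𝒜) (B : ℬ)
    (iStar : F.obj A ⟶ B) (iUpper : B ⟶ F.obj A')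
    (a : A ⟶ A') (ha : F.map a = iStar ≫ iUpper) :
    ∃ (β : B ⟶ B) (r : B ⟶ F.obj (image a)) (s : F.obj (image a) ⟶ B),
      β ≫ β = β ∧ r ≫ s = β ∧ s ≫ r = 𝟙 (F.obj (image a)) :=
  decomposition_mechanism_general 𝒜 ℬ hmono hepi F A A' B iStar iUpper a ha
end
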